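/- arXiv:2405.03086 — 5 statements merged into one kernel-verified Lean document; each statement's English description precedes it below -/
import Mathlib

section
/- Let q be a prime power and E, F ⊆ 𝔽_q^d be finite sets, and let λ ∈ 𝔽_q with λ ≠ 0. Let N_λ(E,F) denote the number of pairs (x,y) ∈ E × F with x·y = λ. Then |N_λ(E,F) − |E||F|/q| ≤ C · q^((d−1)/2) · |E|^(1/2) · |F|^(1/2) for some absolute constant C. -/
/-!
Write `q N - |E||A| = ∑_{x ∈ E} D(x)` with `D(x) = q #{y ∈ A | x ⬝ᵥ y = λ} - |A|` and apply
Cauchy–Schwarz in `x`, enlarging `∑_{x ∈ E} D(x)²` to the sum over all of `𝔽_q^d`.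
With a primitive additive character `ψ`, `D(x) = ∑_{y ∈ A, t ≠ 0} ψ(t (x ⬝ᵥ y - λ))`, so
orthogonality in `x` turns `∑_x D(x)²` into `q^d` times a sum over the pairs with
`t • y = t' • y'`. Writing `t = t' s` and summing over `t'` first gives `q - 1` for `s = 1` and,
because `λ ≠ 0`, `-1` for every other `s`; so the sum is `q^d ∑_{y ∈ A} (q - #{s ≠ 0 | s • y ∈ A})`,
which is at most `q^(d+1) |A|`.
-/

open Finset

theorem AddChar.map_sum_eq_prod {A M κ : Type*} [AddCommMonoid A] [CommMonoid M]
    (ψ : AddChar A M) (s : Finset κ) (f : κ → A) : ψ (∑ i ∈ s, f i) = ∏ i ∈ s, ψ (f i) :=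
  map_prod ψ.toMonoidHom (fun i => Multiplicative.ofAdd (f i)) s

theorem Fintype.sum_eq_apply_zero_add_sum_units {G₀ M : Type*} [GroupWithZero G₀] [Fintype G₀]
    [DecidableEq G₀] [AddCommMonoid M] (f : G₀ → M) : ∑ a, f a = f 0 + ∑ u : G₀ˣ, f u := by
  rw [Fintype.sum_eq_add_sum_subtype_ne _ 0, ← unitsEquivNeZero.sum_comp]
  rfl

theorem sqrt_pow_succ_eq_mul_rpow {x : ℝ} (hx : 0 < x) (n : ℕ) :
    √(x ^ (n + 1)) = x * x ^ (((n : ℝ) - 1) / 2) := by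
  rw [Real.sqrt_eq_rpow, ← Real.rpow_natCast, ← Real.rpow_mul hx.le,
    show ((n + 1 : ℕ) : ℝ) * (1 / 2) = 1 + ((n : ℝ) - 1) / 2 by push_cast; ring,
    Real.rpow_add hx, Real.rpow_one]

section

variable {F ι : Type*} [Field F] [Fintype F] [DecidableEq F] [Fintype ι]
  {ψ : AddChar F ℂ}

theorem sum_apply_dotProduct [DecidableEq ι] (hψ : ψ.IsPrimitive) (v : ι → F) :
    ∑ x : ι → F, ψ (x ⬝ᵥ v) = if v = 0 then (Fintype.card F : ℂ) ^ Fintype.card ι else 0 := by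
  simp_rw [dotProduct, ψ.map_sum_eq_prod, ← Fintype.prod_sum (fun i a => ψ (a * v i)),
    AddChar.sum_mulShift _ hψ]
  split_ifs with hv
  · simp [hv]
  · obtain ⟨i, hi⟩ := Function.ne_iff.mp hv
    exact prod_eq_zero (mem_univ i) (by simpa using hi)

theorem sum_units_apply_mul (hψ : ψ.IsPrimitive) (a : F) :
    ∑ u : Fˣ, ψ (u * a) = if a = 0 then (Fintype.card F : ℂ) - 1 else -1 := by
  have h := AddChar.sum_mulShift a hψ
  rw [Fintype.sum_eq_apply_zero_add_sum_units, zero_mul, AddChar.map_zero_eq_one] at h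
  split_ifs at h ⊢ <;> linear_combination h

theorem sum_norm_sq_sum_apply_dotProduct_add {κ : Type*} [DecidableEq ι] (hψ : ψ.IsPrimitive)
    (s : Finset κ) (v : κ → ι → F) (c : κ → F) :
    ((∑ x : ι → F, ‖∑ p ∈ s, ψ (x ⬝ᵥ v p + c p)‖ ^ 2 : ℝ) : ℂ) =
      (Fintype.card F : ℂ) ^ Fintype.card ι *
        ∑ p ∈ s, ∑ r ∈ s, if v p = v r then ψ (c p - c r) else 0 := by
  have hsummand : ∀ x p r, ψ (x ⬝ᵥ v p + c p) * ψ (-(x ⬝ᵥ v r + c r)) =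
      ψ (x ⬝ᵥ (v p - v r)) * ψ (c p - c r) := fun x p r => by
    rw [← ψ.map_add_eq_mul, ← ψ.map_add_eq_mul, dotProduct_sub]; ring_nf
  push_cast
  simp_rw [← Complex.mul_conj', map_sum, ← AddChar.map_neg_eq_conj, sum_mul_sum, hsummand]
  rw [sum_comm, mul_sum]
  refine sum_congr rfl fun p _ => ?_
  rw [sum_comm, mul_sum]
  refine sum_congr rfl fun r _ => ?_
  rw [← sum_mul, sum_apply_dotProduct hψ]
  simp only [sub_eq_zero]
  split_ifs <;> simp

theorem sum_sum_ite_smul_eq_smul (hψ : ψ.IsPrimitive) {lam : F} (hlam : lam ≠ 0)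
    (A : Finset (ι → F)) :
    ∑ p ∈ A ×ˢ (univ : Finset Fˣ), ∑ r ∈ A ×ˢ (univ : Finset Fˣ),
      (if p.2 • p.1 = r.2 • r.1 then ψ (lam * (r.2 - p.2)) else 0) =
    ∑ y ∈ A, ((Fintype.card F : ℂ) - #{s : Fˣ | s • y ∈ A}) := by
  rw [sum_product]
  refine sum_congr rfl fun y hy => ?_
  have hcollapse : ∀ t : Fˣ,
      ∑ r ∈ A ×ˢ (univ : Finset Fˣ), (if t • y = r.2 • r.1 then ψ (lam * (r.2 - t)) else 0) =
        ∑ t' : Fˣ, if (t'⁻¹ * t) • y ∈ A then ψ (lam * (t' - t)) else 0 := by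
    intro t
    rw [sum_product_right]
    refine sum_congr rfl fun t' _ => ?_
    simp_rw [eq_comm (a := t • y), ← eq_inv_smul_iff (g := t'), ← mul_smul]
    exact sum_ite_eq' A _ _
  have hsubst : ∀ t' : Fˣ,
      ∑ t : Fˣ, (if (t'⁻¹ * t) • y ∈ A then ψ (lam * (t' - t)) else 0) =
        ∑ s : Fˣ, if s • y ∈ A then ψ (t' * (lam * (1 - s))) else 0 := by
    intro t'
    rw [← Equiv.sum_comp (Equiv.mulLeft t')]
    refine sum_congr rfl fun s _ => ?_
    simp only [Equiv.coe_mulLeft, inv_mul_cancel_left, Units.val_mul]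
    ring_nf
  have hinner : ∀ s : Fˣ,
      ∑ t' : Fˣ, (if s • y ∈ A then ψ (t' * (lam * (1 - s))) else 0) =
        if s • y ∈ A then (if s = 1 then (Fintype.card F : ℂ) else 0) - 1 else 0 := by
    intro s
    by_cases hs : s • y ∈ A
    · have hzero : lam * (1 - s) = 0 ↔ s = 1 := by
        rw [mul_eq_zero, or_iff_right hlam, sub_eq_zero, eq_comm, Units.val_eq_one]
      simp only [hs, if_true, sum_units_apply_mul hψ, hzero]
      split_ifs <;> ring
    · simp [hs]
  simp_rw [hcollapse]
  rw [sum_comm]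
  simp_rw [hsubst]
  rw [sum_comm]
  simp_rw [hinner]
  rw [← sum_filter, sum_sub_distrib, sum_ite_eq']
  simp [hy]

noncomputable def dotDiscrepancy (A : Finset (ι → F)) (lam : F) (x : ι → F) : ℝ :=
  Fintype.card F * #{y ∈ A | x ⬝ᵥ y = lam} - #A

theorem mul_card_dotProduct_eq_sub_eq_sum_dotDiscrepancy (E A : Finset (ι → F)) (lam : F) :
    Fintype.card F * (#{p ∈ E ×ˢ A | p.1 ⬝ᵥ p.2 = lam} : ℝ) - #E * #A =
      ∑ x ∈ E, dotDiscrepancy A lam x := by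
  simp only [dotDiscrepancy, sum_sub_distrib, ← mul_sum, sum_const, nsmul_eq_mul, card_filter,
    sum_product]
  push_cast
  ring

theorem dotDiscrepancy_eq_sum_apply (hψ : ψ.IsPrimitive) (A : Finset (ι → F)) (lam : F)
    (x : ι → F) :
    (dotDiscrepancy A lam x : ℂ) = ∑ y ∈ A, ∑ u : Fˣ, ψ (u * (x ⬝ᵥ y - lam)) := by
  simp only [dotDiscrepancy, sum_units_apply_mul hψ, sub_eq_zero, sum_ite, sum_const,
    nsmul_eq_mul]
  have hsplit : (#{y ∈ A | x ⬝ᵥ y = lam} : ℂ) + #{y ∈ A | ¬x ⬝ᵥ y = lam} = #A := by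
    exact_mod_cast card_filter_add_card_filter_not _
  push_cast
  linear_combination hsplit

theorem sum_dotDiscrepancy_sq_le [DecidableEq ι] (hψ : ψ.IsPrimitive) {lam : F} (hlam : lam ≠ 0)
    (A : Finset (ι → F)) :
    ∑ x, dotDiscrepancy A lam x ^ 2 ≤ (Fintype.card F : ℝ) ^ (Fintype.card ι + 1) * #A := by
  have hD : ∀ x, dotDiscrepancy A lam x ^ 2 =
      ‖∑ p ∈ A ×ˢ (univ : Finset Fˣ), ψ (x ⬝ᵥ p.2 • p.1 + -(p.2 * lam))‖ ^ 2 := by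
    intro x
    rw [← sq_abs, ← Real.norm_eq_abs, ← Complex.norm_real, dotDiscrepancy_eq_sum_apply hψ,
      sum_product]
    congr 3 with y
    refine sum_congr rfl fun u _ => ?_
    rw [dotProduct_smul, Units.smul_def, smul_eq_mul]
    ring_nf
  have hsum : ((∑ x, dotDiscrepancy A lam x ^ 2 : ℝ) : ℂ) =
      (((Fintype.card F : ℝ) ^ Fintype.card ι *
        ∑ y ∈ A, ((Fintype.card F : ℝ) - #{s : Fˣ | s • y ∈ A}) : ℝ) : ℂ) := by
    simp_rw [hD]
    rw [sum_norm_sq_sum_apply_dotProduct_add hψ]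
    push_cast
    rw [← sum_sum_ite_smul_eq_smul hψ hlam]
    congr 1
    refine sum_congr rfl fun p _ => sum_congr rfl fun r _ => ?_
    congr 2
    ring
  have hbound : ∑ y ∈ A, ((Fintype.card F : ℝ) - #{s : Fˣ | s • y ∈ A}) ≤
      Fintype.card F * #A := by
    rw [mul_comm, ← nsmul_eq_mul, ← sum_const]
    exact sum_le_sum fun y _ => sub_le_self _ (Nat.cast_nonneg _)
  rw [Complex.ofReal_inj.mp hsum, pow_succ, mul_assoc]
  gcongr

theorem abs_card_dotProduct_eq_sub_le [DecidableEq ι] {lam : F} (hlam : lam ≠ 0)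
    (E A : Finset (ι → F)) :
    |(#{p ∈ E ×ˢ A | p.1 ⬝ᵥ p.2 = lam} : ℝ) - #E * #A / Fintype.card F| ≤
      (Fintype.card F : ℝ) ^ (((Fintype.card ι : ℝ) - 1) / 2) * √(#E : ℝ) * √(#A : ℝ) := by
  obtain ⟨ψ, hψ⟩ : ∃ ψ : AddChar F ℂ, ψ.IsPrimitive :=
    ⟨_, AddChar.FiniteField.primitiveChar_to_Complex_isPrimitive F⟩
  have hq : (0 : ℝ) < Fintype.card F := Nat.cast_pos.mpr Fintype.card_pos
  have hcauchySchwarz : (∑ x ∈ E, dotDiscrepancy A lam x) ^ 2 ≤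
      #E * ((Fintype.card F : ℝ) ^ (Fintype.card ι + 1) * #A) :=
    sq_sum_le_card_mul_sum_sq.trans <| mul_le_mul_of_nonneg_left
      ((sum_le_univ_sum_of_nonneg fun _ => sq_nonneg _).trans
        (sum_dotDiscrepancy_sq_le hψ hlam A)) (Nat.cast_nonneg _)
  have hcount : (Fintype.card F : ℝ) * ((#{p ∈ E ×ˢ A | p.1 ⬝ᵥ p.2 = lam} : ℝ) -
      #E * #A / Fintype.card F) = ∑ x ∈ E, dotDiscrepancy A lam x := by
    rw [mul_sub, mul_div_cancel₀ _ hq.ne', mul_card_dotProduct_eq_sub_eq_sum_dotDiscrepancy]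
  refine le_of_mul_le_mul_left ?_ hq
  calc (Fintype.card F : ℝ) * |(#{p ∈ E ×ˢ A | p.1 ⬝ᵥ p.2 = lam} : ℝ) - #E * #A / Fintype.card F|
      = |∑ x ∈ E, dotDiscrepancy A lam x| := by rw [← hcount, abs_mul, abs_of_pos hq]
    _ ≤ √(#E * ((Fintype.card F : ℝ) ^ (Fintype.card ι + 1) * #A)) :=
        Real.abs_le_sqrt hcauchySchwarz
    _ = _ := by
      rw [Real.sqrt_mul (Nat.cast_nonneg _), Real.sqrt_mul (by positivity),
        sqrt_pow_succ_eq_mul_rpow hq]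
      ring

end

theorem stmt_0 :
    ∃ C : ℝ, 0 < C ∧
      ∀ (F : Type) [Field F] [Fintype F] [DecidableEq F] (d : ℕ)
        (E A : Finset (Fin d → F)) (lam : F), lam ≠ 0 →
        |((((E ×ˢ A).filter (fun p => ∑ i, p.1 i * p.2 i = lam)).card : ℝ)
            - (E.card : ℝ) * A.card / Fintype.card F)|
          ≤ C * (Fintype.card F : ℝ) ^ (((d : ℝ) - 1) / 2)
              * Real.sqrt E.card * Real.sqrt A.card := by
  refine ⟨1, one_pos, fun F _ _ _ d E A lam hlam => ?_⟩
  have h := abs_card_dotProduct_eq_sub_le hlam E A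
  rw [Fintype.card_fin] at h
  rwa [one_mul]
end

section
/- Let E, F ⊆ 𝔽_q^d and let N be the number of quadruples (x₁, x₂, y₁, y₂) ∈ E × E × F × F such that x₁·y₁ = x₂·y₂. Then |N − |E|²|F|²/q| ≤ C · q^d · |E| · |F| for some absolute constant C. -/
/-!
Let `ν t` be the number of pairs `(x, y) ∈ E × A` with `x ⬝ᵥ y = t`. Then `N = ∑ t, ν t ^ 2`, so
`N - |E|²|A|²/q = ∑ t, (ν t - |E||A|/q) ^ 2` is a sum of squares. Each deviation
`ν t - |E||A|/q` is the sum over `x ∈ E` of `#{y ∈ A | x ⬝ᵥ y = t} - |A|/q`; Cauchy–Schwarz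
extends this sum to all `x` at the cost of a factor `|E|`, and then double counting turns the
sum of squares into a count of triples `(x, y, y')` with `x ⬝ᵥ y = x ⬝ᵥ y'`. For `y ≠ y'` these
`x` form a hyperplane of `q ^ (d - 1)` points, which cancels the main term and leaves at most
`q ^ d |A|`. Only this last property of the dot product matters, so the estimate holds for any
pairing `φ : X → Y → T` under which distinct `y, y'` agree on at most `|X|/|T|` points `x`.
-/

open Finset

section Fibers

variable {α T : Type*} [Fintype T] [DecidableEq T]

theorem sum_card_fiber (s : Finset α) (f : α → T) : ∑ t, #{a ∈ s | f a = t} = #s :=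
  (card_eq_sum_card_fiberwise fun _ _ => mem_univ _).symm

theorem card_filter_eq_sum_card_fiber_sq (s : Finset α) (f : α → T) :
    #{p ∈ s ×ˢ s | f p.1 = f p.2} = ∑ t, #{a ∈ s | f a = t} ^ 2 := by
  rw [card_eq_sum_card_fiberwise (f := fun p => f p.1) fun _ _ => mem_univ _]
  refine sum_congr rfl fun t _ => ?_
  rw [sq, ← card_product]
  congr 1
  ext ⟨a, b⟩
  simp only [mem_filter, mem_product]
  constructor
  · rintro ⟨⟨⟨ha, hb⟩, hab⟩, rfl⟩
    exact ⟨⟨ha, rfl⟩, hb, hab.symm⟩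
  · rintro ⟨⟨ha, rfl⟩, hb, hab⟩
    exact ⟨⟨⟨ha, hb⟩, hab.symm⟩, rfl⟩

theorem sum_card_fiber_sub_sq [Nonempty T] (s : Finset α) (f : α → T) :
    ∑ t, ((#{a ∈ s | f a = t} : ℝ) - #s / Fintype.card T) ^ 2
      = #{p ∈ s ×ˢ s | f p.1 = f p.2} - (#s : ℝ) ^ 2 / Fintype.card T := by
  have hq : (Fintype.card T : ℝ) ≠ 0 := by positivity
  have hsum : ∑ t, (#{a ∈ s | f a = t} : ℝ) = #s := by exact_mod_cast sum_card_fiber s f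
  have henergy : (#{p ∈ s ×ˢ s | f p.1 = f p.2} : ℝ) = ∑ t, (#{a ∈ s | f a = t} : ℝ) ^ 2 := by
    exact_mod_cast card_filter_eq_sum_card_fiber_sq s f
  simp only [sub_sq, sum_add_distrib, sum_sub_distrib, ← sum_mul, ← mul_sum, hsum, henergy,
    sum_const, card_univ, nsmul_eq_mul]
  field_simp
  ring

end Fibers

theorem AddMonoidHom.card_fiber_mul_card_eq {G M : Type*} [AddGroup G] [Fintype G] [AddMonoid M]
    [Fintype M] [DecidableEq M] (f : G →+ M) (hf : Function.Surjective f) (t : M) :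
    #{g | f g = t} * Fintype.card M = Fintype.card G := by
  calc #{g | f g = t} * Fintype.card M = ∑ s : M, #{g | f g = t} := by simp [mul_comm]
    _ = ∑ s : M, #{g | f g = s} :=
      sum_congr rfl fun s _ => AddMonoidHom.card_fiber_eq_of_mem_range f (hf t) (hf s)
    _ = Fintype.card G := sum_card_fiber univ f

theorem card_dotProduct_eq_dotProduct_mul_card {K ι : Type*} [Field K] [Fintype K] [DecidableEq K]
    [Fintype ι] [DecidableEq ι] {y y' : ι → K} (h : y ≠ y') :
    #{x | x ⬝ᵥ y = x ⬝ᵥ y'} * Fintype.card K = Fintype.card (ι → K) := by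
  obtain ⟨i, hi⟩ : ∃ i, (y - y') i ≠ 0 := Function.ne_iff.mp (sub_ne_zero.mpr h)
  let f : (ι → K) →+ K := AddMonoidHom.mk' (· ⬝ᵥ (y - y')) fun a b => add_dotProduct a b _
  have hf : Function.Surjective f := fun c =>
    ⟨Pi.single i (c / (y - y') i), by
      simp only [f, AddMonoidHom.mk'_apply, single_dotProduct]
      exact div_mul_cancel₀ c hi⟩
  convert f.card_fiber_mul_card_eq hf 0 using 4
  simp [f, dotProduct_sub, sub_eq_zero]

section Pairing

variable {X Y T : Type*} [DecidableEq T] (φ : X → Y → T)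

theorem card_pairing_eq_card_uncurry (E : Finset X) (A : Finset Y) :
    #{p ∈ (E ×ˢ E) ×ˢ (A ×ˢ A) | φ p.1.1 p.2.1 = φ p.1.2 p.2.2}
      = #{p ∈ (E ×ˢ A) ×ˢ (E ×ˢ A) | Function.uncurry φ p.1 = Function.uncurry φ p.2} := by
  refine card_nbij' (fun p => ((p.1.1, p.2.1), (p.1.2, p.2.2)))
    (fun p => ((p.1.1, p.2.1), (p.1.2, p.2.2))) ?_ ?_ (fun _ _ => rfl) (fun _ _ => rfl) <;>
  · intro p hp
    simp only [coe_filter, mem_product, Set.mem_ofPred_eq] at hp ⊢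
    tauto

theorem card_filter_product_eq_sum (E : Finset X) (A : Finset Y) (t : T) :
    #{p ∈ E ×ˢ A | Function.uncurry φ p = t} = ∑ x ∈ E, #{y ∈ A | φ x y = t} := by
  simp only [card_filter, sum_product]
  rfl

theorem sum_card_filter_pairing_le [Fintype X] [Fintype T] [Nonempty T]
    (hφ : ∀ y y', y ≠ y' → #{x | φ x y = φ x y'} * Fintype.card T ≤ Fintype.card X)
    (A : Finset Y) :
    ∑ x, (#{p ∈ A ×ˢ A | φ x p.1 = φ x p.2} : ℝ)
      ≤ #A * Fintype.card X + #A ^ 2 * Fintype.card X / Fintype.card T := by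
  classical
  have hq : (0 : ℝ) < Fintype.card T := Nat.cast_pos.mpr Fintype.card_pos
  have hpair : ∀ p ∈ A ×ˢ A, (#{x | φ x p.1 = φ x p.2} : ℝ)
      ≤ (if p.1 = p.2 then (Fintype.card X : ℝ) else 0) + Fintype.card X / Fintype.card T := by
    rintro ⟨y, y'⟩ -
    by_cases h : y = y'
    · rw [if_pos h]
      exact (Nat.cast_le.mpr (card_le_univ _)).trans (le_add_of_nonneg_right (by positivity))
    · rw [if_neg h, zero_add, le_div_iff₀ hq]
      exact_mod_cast hφ y y' h
  calc ∑ x, (#{p ∈ A ×ˢ A | φ x p.1 = φ x p.2} : ℝ)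
      = ∑ p ∈ A ×ˢ A, (#{x | φ x p.1 = φ x p.2} : ℝ) := by
        exact_mod_cast sum_card_bipartiteAbove_eq_sum_card_bipartiteBelow
          (r := fun x (p : Y × Y) => φ x p.1 = φ x p.2)
    _ ≤ ∑ p ∈ A ×ˢ A, ((if p.1 = p.2 then (Fintype.card X : ℝ) else 0)
          + Fintype.card X / Fintype.card T) := sum_le_sum hpair
    _ = #A * Fintype.card X + #A ^ 2 * Fintype.card X / Fintype.card T := by
        simp only [sum_add_distrib, sum_product, sum_ite_eq, sum_ite_mem, inter_self, sum_const,
          nsmul_eq_mul, card_product]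
        push_cast
        ring

theorem abs_card_pairing_sub_le [Fintype X] [Fintype T] [Nonempty T]
    (hφ : ∀ y y', y ≠ y' → #{x | φ x y = φ x y'} * Fintype.card T ≤ Fintype.card X)
    (E : Finset X) (A : Finset Y) :
    |(#{p ∈ (E ×ˢ E) ×ˢ (A ×ˢ A) | φ p.1.1 p.2.1 = φ p.1.2 p.2.2} : ℝ)
        - (#E : ℝ) ^ 2 * (#A : ℝ) ^ 2 / Fintype.card T|
      ≤ Fintype.card X * #E * #A := by
  set q : ℝ := (Fintype.card T : ℝ)
  set c : X → T → ℝ := fun x t => #{y ∈ A | φ x y = t} - #A / q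
  have hdev : (#{p ∈ (E ×ˢ E) ×ˢ (A ×ˢ A) | φ p.1.1 p.2.1 = φ p.1.2 p.2.2} : ℝ)
      - (#E : ℝ) ^ 2 * (#A : ℝ) ^ 2 / q = ∑ t, (∑ x ∈ E, c x t) ^ 2 := by
    rw [card_pairing_eq_card_uncurry, ← mul_pow, ← Nat.cast_mul, ← card_product,
      ← sum_card_fiber_sub_sq]
    refine sum_congr rfl fun t _ => ?_
    simp only [c, card_filter_product_eq_sum, sum_sub_distrib, sum_const, card_product,
      nsmul_eq_mul]
    push_cast
    ring
  have hcol : ∀ x, ∑ t, c x t ^ 2 = #{p ∈ A ×ˢ A | φ x p.1 = φ x p.2} - (#A : ℝ) ^ 2 / q :=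
    fun x => sum_card_fiber_sub_sq A (φ x)
  rw [hdev, abs_of_nonneg (by positivity)]
  calc ∑ t, (∑ x ∈ E, c x t) ^ 2
      ≤ ∑ t, #E * ∑ x, c x t ^ 2 := sum_le_sum fun t _ => sq_sum_le_card_mul_sum_sq.trans
        (mul_le_mul_of_nonneg_left (sum_le_univ_sum_of_nonneg fun _ => sq_nonneg _)
          (Nat.cast_nonneg _))
    _ = #E * ∑ x, ((#{p ∈ A ×ˢ A | φ x p.1 = φ x p.2} : ℝ) - (#A : ℝ) ^ 2 / q) := by
        rw [← mul_sum, sum_comm]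
        simp_rw [hcol]
    _ ≤ #E * (Fintype.card X * #A) := by
        gcongr
        rw [sum_sub_distrib, sum_const, card_univ, nsmul_eq_mul]
        have hcard : (#A : ℝ) ^ 2 * Fintype.card X / q = Fintype.card X * ((#A : ℝ) ^ 2 / q) := by
          ring
        linarith [sum_card_filter_pairing_le φ hφ A]
    _ = Fintype.card X * #E * #A := by ring

end Pairing

theorem stmt_1 :
    ∃ C : ℝ, 0 < C ∧
      ∀ (F : Type) [Field F] [Fintype F] [DecidableEq F] (d : ℕ)
        (E A : Finset (Fin d → F)),
        |(((( (E ×ˢ E) ×ˢ (A ×ˢ A)).filter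
              (fun p => ∑ i, p.1.1 i * p.2.1 i = ∑ i, p.1.2 i * p.2.2 i)).card : ℝ)
            - (E.card : ℝ) ^ 2 * (A.card : ℝ) ^ 2 / Fintype.card F)|
          ≤ C * (Fintype.card F : ℝ) ^ d * E.card * A.card := by
  refine ⟨1, one_pos, fun F _ _ _ d E A => ?_⟩
  have h := abs_card_pairing_sub_le (φ := dotProduct)
    (fun y y' h => (card_dotProduct_eq_dotProduct_mul_card h).le) E A
  rw [Fintype.card_fun, Fintype.card_fin, Nat.cast_pow] at h
  rw [one_mul]
  exact h
end

section
/- Let χ be a nontrivial additive character of 𝔽_q and E, F ⊆ 𝔽_q^d. Then |Σ_{x₁,x₂∈E} Σ_{y₁,y₂∈F} Σ_{t∈𝔽_q} χ(t·(x₁·y₁ − x₂·y₂)) − |E|²|F|²| ≤ C · q^(d+1) · |E| · |F| for some absolute constant C. -/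
/-!
Writing `S(t) = ∑_{x ∈ E, y ∈ A} χ(t (x·y))`, the quadruple sum is `∑_t |S(t)|²`, and the
term `t = 0` is exactly `|E|²|A|²`. For `t ≠ 0` the character `s ↦ χ(t s)` is again
nontrivial, so Cauchy–Schwarz in `x` followed by orthogonality of the characters
`x ↦ χ(t (x·c))` over all of `𝔽_q^d` gives `|S(t)|² ≤ |E| q^d |A|`. Summing over the
`q - 1` nonzero `t` gives the bound with `C = 1`.
-/

open Finset

/-- Old Mathlib `AddChar.IsNontrivial` (removed): some value differs from 1. -/
def AddChar.IsNontrivial {A M : Type*} [AddMonoid A] [Monoid M] (ψ : AddChar A M) : Prop :=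
  ∃ a : A, ψ a ≠ 1

namespace AddChar

lemma IsNontrivial.ne_one {A M : Type*} [AddMonoid A] [Monoid M] {ψ : AddChar A M}
    (hψ : ψ.IsNontrivial) : ψ ≠ 1 := by
  rintro rfl
  obtain ⟨a, ha⟩ := hψ
  exact ha (one_apply a)

lemma map_sum_eq_prod_s2 {A M : Type*} [AddCommMonoid A] [CommMonoid M] (ψ : AddChar A M)
    {κ : Type*} (s : Finset κ) (f : κ → A) : ψ (∑ i ∈ s, f i) = ∏ i ∈ s, ψ (f i) :=
  map_prod ψ.toMonoidHom (fun i => Multiplicative.ofAdd (f i)) s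

lemma map_sub_eq_mul_conj {G : Type*} [AddCommGroup G] [Finite G] (ψ : AddChar G ℂ) (a b : G) :
    ψ (a - b) = ψ a * (starRingEnd ℂ) (ψ b) := by
  rw [sub_eq_add_neg, map_add_eq_mul, map_neg_eq_conj]

section dotProduct

variable {R : Type*} [CommRing R] [Fintype R] {ι : Type*} [Fintype ι]

lemma sum_apply_mul_sub_dotProduct_eq_sum_norm_sq (ψ : AddChar R ℂ) (E A : Finset (ι → R)) :
    ∑ x₁ ∈ E, ∑ x₂ ∈ E, ∑ y₁ ∈ A, ∑ y₂ ∈ A, ∑ t, ψ (t * (x₁ ⬝ᵥ y₁ - x₂ ⬝ᵥ y₂)) =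
      ∑ t, ((‖∑ x ∈ E, ∑ y ∈ A, ψ.mulShift t (x ⬝ᵥ y)‖ ^ 2 : ℝ) : ℂ) := by
  push_cast
  simp_rw [← Complex.mul_conj', map_sum, sum_mul_sum, mul_sub, ψ.map_sub_eq_mul_conj,
    mulShift_apply]
  simp only [sum_comm (t := (univ : Finset R))]

variable [DecidableEq R] [DecidableEq ι]

lemma sum_apply_dotProduct {R' : Type*} [CommRing R'] [IsDomain R'] {ψ : AddChar R R'}
    (hψ : ψ.IsPrimitive) (c : ι → R) :
    ∑ x : ι → R, ψ (x ⬝ᵥ c) = if c = 0 then (Fintype.card R : R') ^ Fintype.card ι else 0 := by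
  simp_rw [dotProduct, ψ.map_sum_eq_prod_s2]
  rw [← Fintype.prod_sum fun i a => ψ (a * c i)]
  simp_rw [sum_mulShift _ hψ, Nat.cast_ite, Nat.cast_zero, Fintype.prod_ite_zero,
    prod_const, card_univ, ← funext_iff]
  rfl

lemma sum_norm_sq_sum_apply_dotProduct {ψ : AddChar R ℂ} (hψ : ψ.IsPrimitive)
    (A : Finset (ι → R)) :
    ∑ x : ι → R, ‖∑ y ∈ A, ψ (x ⬝ᵥ y)‖ ^ 2 = (Fintype.card R : ℝ) ^ Fintype.card ι * #A := by
  apply Complex.ofReal_injective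
  push_cast
  simp_rw [← Complex.mul_conj', map_sum, sum_mul_sum, ← ψ.map_sub_eq_mul_conj, ← dotProduct_sub]
  rw [sum_comm]
  simp_rw [fun y => sum_comm (s := univ) (t := A) (f := fun x z => ψ (x ⬝ᵥ (y - z))),
    ψ.sum_apply_dotProduct hψ, sub_eq_zero]
  simp only [sum_ite_eq, sum_ite_mem, inter_self, sum_const, nsmul_eq_mul]
  exact mul_comm _ _

lemma norm_sq_sum_sum_apply_dotProduct_le {ψ : AddChar R ℂ} (hψ : ψ.IsPrimitive)
    (E A : Finset (ι → R)) :
    ‖∑ x ∈ E, ∑ y ∈ A, ψ (x ⬝ᵥ y)‖ ^ 2 ≤ #E * ((Fintype.card R : ℝ) ^ Fintype.card ι * #A) := by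
  calc ‖∑ x ∈ E, ∑ y ∈ A, ψ (x ⬝ᵥ y)‖ ^ 2 ≤ (∑ x ∈ E, ‖∑ y ∈ A, ψ (x ⬝ᵥ y)‖) ^ 2 := by
        gcongr; exact norm_sum_le _ _
    _ ≤ #E * ∑ x ∈ E, ‖∑ y ∈ A, ψ (x ⬝ᵥ y)‖ ^ 2 := sq_sum_le_card_mul_sum_sq
    _ ≤ #E * ∑ x, ‖∑ y ∈ A, ψ (x ⬝ᵥ y)‖ ^ 2 := by
        gcongr; exact subset_univ E
    _ = #E * ((Fintype.card R : ℝ) ^ Fintype.card ι * #A) := by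
        rw [ψ.sum_norm_sq_sum_apply_dotProduct hψ]

end dotProduct

lemma norm_sum_apply_mul_sub_dotProduct_sub_le {F : Type*} [Field F] [Fintype F] [DecidableEq F]
    {ι : Type*} [Fintype ι] [DecidableEq ι] {ψ : AddChar F ℂ} (hψ : ψ ≠ 1)
    (E A : Finset (ι → F)) :
    ‖(∑ x₁ ∈ E, ∑ x₂ ∈ E, ∑ y₁ ∈ A, ∑ y₂ ∈ A, ∑ t, ψ (t * (x₁ ⬝ᵥ y₁ - x₂ ⬝ᵥ y₂))) -
        (#E : ℂ) ^ 2 * (#A : ℂ) ^ 2‖ ≤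
      (Fintype.card F : ℝ) ^ (Fintype.card ι + 1) * #E * #A := by
  have h_zero : ((‖∑ x ∈ E, ∑ y ∈ A, ψ.mulShift 0 (x ⬝ᵥ y)‖ ^ 2 : ℝ) : ℂ) =
      (#E : ℂ) ^ 2 * (#A : ℂ) ^ 2 := by
    simp [mul_pow]
  have h_ne_zero (t : F) (ht : t ≠ 0) : ‖∑ x ∈ E, ∑ y ∈ A, ψ.mulShift t (x ⬝ᵥ y)‖ ^ 2 ≤
      #E * ((Fintype.card F : ℝ) ^ Fintype.card ι * #A) :=
    (ψ.mulShift t).norm_sq_sum_sum_apply_dotProduct_le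
      (IsPrimitive.of_ne_one (IsPrimitive.of_ne_one hψ ht)) E A
  rw [sum_apply_mul_sub_dotProduct_eq_sum_norm_sq, ← add_sum_erase _ _ (mem_univ 0), h_zero,
    add_sub_cancel_left, ← Complex.ofReal_sum, Complex.norm_real,
    Real.norm_of_nonneg (by positivity)]
  calc ∑ t ∈ univ.erase 0, ‖∑ x ∈ E, ∑ y ∈ A, ψ.mulShift t (x ⬝ᵥ y)‖ ^ 2
      ≤ ∑ t ∈ univ.erase 0, #E * ((Fintype.card F : ℝ) ^ Fintype.card ι * #A) :=
        sum_le_sum fun t ht => h_ne_zero t (ne_of_mem_erase ht)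
    _ ≤ Fintype.card F * (#E * ((Fintype.card F : ℝ) ^ Fintype.card ι * #A)) := by
        rw [sum_const, nsmul_eq_mul]
        gcongr
        exact_mod_cast card_erase_le
    _ = (Fintype.card F : ℝ) ^ (Fintype.card ι + 1) * #E * #A := by ring

end AddChar

theorem stmt_2 :
    ∃ C : ℝ, 0 < C ∧
      ∀ (F : Type) [Field F] [Fintype F] [DecidableEq F] (d : ℕ)
        (χ : AddChar F ℂ), χ.IsNontrivial →
        ∀ (E A : Finset (Fin d → F)),
        ‖
            ((∑ x₁ ∈ E, ∑ x₂ ∈ E, ∑ y₁ ∈ A, ∑ y₂ ∈ A, ∑ t : F,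
                χ (t * (∑ i, x₁ i * y₁ i - ∑ i, x₂ i * y₂ i)))
              - (E.card : ℂ) ^ 2 * (A.card : ℂ) ^ 2)‖
          ≤ C * (Fintype.card F : ℝ) ^ (d + 1) * E.card * A.card := by
  refine ⟨1, one_pos, fun F _ _ _ d χ hχ E A => ?_⟩
  have h := χ.norm_sum_apply_mul_sub_dotProduct_sub_le hχ.ne_one E A
  rw [Fintype.card_fin] at h
  rw [one_mul]
  exact h -- `x ⬝ᵥ y` unfolds to `∑ i, x i * y i`
end

section
/- Let E ⊆ 𝔽_q² with |E| ≥ C·q^(3/2) for a sufficiently large constant C. Then the number of quadruples (x, z, x', z') ∈ E⁴ with z·x = z'·x' is at most C'·|E|⁴/q for some absolute constant C'. -/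
open Finset Matrix

/-! Write the count as `∑ t, r t ^ 2` with `r t = #{(x, z) ∈ E² | z ⬝ᵥ x = t}`, and split
`r t = ∑ z ∈ E, b z t` with `b z t = #{x ∈ E | z ⬝ᵥ x = t}`. Since `∑ t, b z t = #E` for every `z`,
the mean of `r` contributes `#E ^ 4 / q`, and by Cauchy–Schwarz its fluctuation contributes at most
`#E` times the total variance `∑ z ∈ 𝔽_qⁿ, ∑ t, (b z t - #E / q) ^ 2`. That variance is at most
`#E * qⁿ`: `∑ t, b z t ^ 2` counts the pairs `x, x' ∈ E` with `z ⬝ᵥ (x - x') = 0`, and for `x ≠ x'`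
exactly `qⁿ / q` vectors `z` do so. Hence the count is at most `#E ^ 2 * qⁿ + #E ^ 4 / q`, and for
`n = 2` the first term is at most `#E ^ 4 / q` as soon as `#E ^ 2 ≥ q ^ 3`. -/

lemma card_filter_product_eq_sum_sq {α β : Type*} [DecidableEq β] [Fintype β]
    (s : Finset α) (f : α → β) :
    #{p ∈ s ×ˢ s | f p.1 = f p.2} = ∑ t, #{a ∈ s | f a = t} ^ 2 := by
  rw [card_eq_sum_card_fiberwise (f := fun p => f p.1) (t := univ) fun _ _ => mem_univ _]
  refine sum_congr rfl fun t _ => ?_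
  rw [sq, ← card_product]
  congr 1
  ext ⟨a, b⟩
  simp only [mem_filter, mem_product]
  grind

lemma sum_card_filter_eq_card {α β : Type*} [DecidableEq β] [Fintype β]
    (s : Finset α) (f : α → β) :
    ∑ t, #{a ∈ s | f a = t} = #s :=
  (card_eq_sum_card_fiberwise fun _ _ => mem_univ _).symm

lemma sum_sub_div_card_sq {T : Type*} [Fintype T] [Nonempty T] (f : T → ℝ) {m : ℝ}
    (hm : ∑ t, f t = m) :
    ∑ t, (f t - m / Fintype.card T) ^ 2 = ∑ t, f t ^ 2 - m ^ 2 / Fintype.card T := by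
  have hT : (Fintype.card T : ℝ) ≠ 0 := by positivity
  simp only [sub_sq, sum_add_distrib, sum_sub_distrib, ← sum_mul, ← mul_sum, hm, sum_const,
    card_univ, nsmul_eq_mul]
  field_simp
  ring

lemma sum_sq_sum_le_card_mul_sum_sum_sub_sq_add {Z T : Type*} [Fintype Z] [Fintype T]
    [Nonempty T] (E : Finset Z) (b : Z → T → ℝ) {m : ℝ} (hb : ∀ z, ∑ t, b z t = m) :
    ∑ t, (∑ z ∈ E, b z t) ^ 2
      ≤ #E * ∑ z, ∑ t, (b z t - m / Fintype.card T) ^ 2 + (#E * m) ^ 2 / Fintype.card T := by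
  have hsum : ∑ t, ∑ z ∈ E, b z t = #E * m := by
    rw [sum_comm]
    simp [hb]
  rw [← sub_le_iff_le_add, ← sum_sub_div_card_sq _ hsum]
  calc ∑ t, (∑ z ∈ E, b z t - #E * m / Fintype.card T) ^ 2
      = ∑ t, (∑ z ∈ E, (b z t - m / Fintype.card T)) ^ 2 := by
        simp only [sum_sub_distrib, sum_const, nsmul_eq_mul, mul_div_assoc]
    _ ≤ ∑ t, (#E : ℝ) * ∑ z ∈ E, (b z t - m / Fintype.card T) ^ 2 :=
        sum_le_sum fun t _ => sq_sum_le_card_mul_sum_sq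
    _ ≤ ∑ t, (#E : ℝ) * ∑ z, (b z t - m / Fintype.card T) ^ 2 := by
        gcongr
        exact subset_univ E
    _ = (#E : ℝ) * ∑ z, ∑ t, (b z t - m / Fintype.card T) ^ 2 := by
        rw [← mul_sum, sum_comm]

section

variable {ι F : Type*} [Fintype ι] [DecidableEq ι] [Field F] [Fintype F] [DecidableEq F]

lemma card_filter_dotProduct_eq_zero_mul_card {v : ι → F} (hv : v ≠ 0) :
    #{z | v ⬝ᵥ z = 0} * Fintype.card F = Fintype.card F ^ Fintype.card ι := by
  set f := dotProductEquiv F ι v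
  have hf : f ≠ 0 := by simpa [f] using hv
  have hker := Module.Dual.finrank_ker_add_one_of_ne_zero hf
  rw [Module.finrank_fintype_fun_eq_card] at hker
  rw [← hker, pow_succ, ← Nat.card_eq_fintype_card (α := F), ← Module.natCard_eq_pow_finrank]
  congr 1
  rw [← Fintype.card_subtype, ← Nat.card_eq_fintype_card]
  exact Nat.card_congr (Equiv.subtypeEquivRight fun z => by simp [f])

lemma sum_card_filter_dotProduct_eq_dotProduct_le (E : Finset (ι → F)) :
    ∑ z, (#{p ∈ E ×ˢ E | z ⬝ᵥ p.1 = z ⬝ᵥ p.2} : ℝ)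
      ≤ #E * (Fintype.card F : ℝ) ^ Fintype.card ι
        + #E ^ 2 * (Fintype.card F : ℝ) ^ Fintype.card ι / Fintype.card F := by
  have hswap : ∑ z, #{p ∈ E ×ˢ E | z ⬝ᵥ p.1 = z ⬝ᵥ p.2}
      = ∑ p ∈ E ×ˢ E, #{z | z ⬝ᵥ p.1 = z ⬝ᵥ p.2} := by
    simp only [card_filter]
    exact sum_comm
  have hdiag (p : (ι → F) × (ι → F)) :
      (#{z | z ⬝ᵥ p.1 = z ⬝ᵥ p.2} : ℝ) ≤ (Fintype.card F : ℝ) ^ Fintype.card ι := by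
    exact_mod_cast (card_filter_le _ _).trans_eq (by simp)
  have hoffDiag {p : (ι → F) × (ι → F)} (h : p.1 ≠ p.2) :
      (#{z | z ⬝ᵥ p.1 = z ⬝ᵥ p.2} : ℝ)
        = (Fintype.card F : ℝ) ^ Fintype.card ι / Fintype.card F := by
    have hfilter : #{z | z ⬝ᵥ p.1 = z ⬝ᵥ p.2} = #{z | (p.1 - p.2) ⬝ᵥ z = 0} := by
      congr 1 with z
      rw [mem_filter_univ, mem_filter_univ, sub_dotProduct, dotProduct_comm, dotProduct_comm p.2,
        sub_eq_zero]
    rw [eq_div_iff (by positivity), hfilter]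
    exact_mod_cast card_filter_dotProduct_eq_zero_mul_card (sub_ne_zero.2 h)
  set q : ℝ := (Fintype.card F : ℝ)
  set n := Fintype.card ι
  have hterm : ∀ p ∈ E ×ˢ E,
      (#{z | z ⬝ᵥ p.1 = z ⬝ᵥ p.2} : ℝ) ≤ (if p.1 = p.2 then q ^ n else 0) + q ^ n / q := by
    intro p _
    split_ifs with h
    · linarith [hdiag p, show 0 ≤ q ^ n / q by positivity]
    · rw [zero_add, hoffDiag h]
  calc ∑ z, (#{p ∈ E ×ˢ E | z ⬝ᵥ p.1 = z ⬝ᵥ p.2} : ℝ)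
      = ∑ p ∈ E ×ˢ E, (#{z | z ⬝ᵥ p.1 = z ⬝ᵥ p.2} : ℝ) := by exact_mod_cast hswap
    _ ≤ ∑ p ∈ E ×ˢ E, ((if p.1 = p.2 then q ^ n else 0) + q ^ n / q) := sum_le_sum hterm
    _ = #E * q ^ n + #E ^ 2 * q ^ n / q := by
      rw [sum_add_distrib, sum_ite, sum_const_zero, add_zero, sum_const, sum_const,
        ← diag_eq_filter, diag_card, card_product, nsmul_eq_mul, nsmul_eq_mul]
      push_cast
      ring

lemma sum_sum_sub_sq_card_filter_dotProduct_le (E : Finset (ι → F)) :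
    ∑ z, ∑ t, ((#{x ∈ E | z ⬝ᵥ x = t} : ℝ) - #E / Fintype.card F) ^ 2
      ≤ #E * (Fintype.card F : ℝ) ^ Fintype.card ι := by
  have hfib (z : ι → F) : ∑ t, (#{x ∈ E | z ⬝ᵥ x = t} : ℝ) = #E := by
    exact_mod_cast sum_card_filter_eq_card E (z ⬝ᵥ ·)
  have hcoll (z : ι → F) : ∑ t, (#{x ∈ E | z ⬝ᵥ x = t} : ℝ) ^ 2
      = #{p ∈ E ×ˢ E | z ⬝ᵥ p.1 = z ⬝ᵥ p.2} := by
    exact_mod_cast (card_filter_product_eq_sum_sq E (z ⬝ᵥ ·)).symm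
  rw [sum_congr rfl fun z _ => sum_sub_div_card_sq _ (hfib z)]
  simp only [hcoll, sum_sub_distrib, sum_const, card_univ, Fintype.card_fun, nsmul_eq_mul]
  push_cast
  have hreorder : (Fintype.card F : ℝ) ^ Fintype.card ι * (#E ^ 2 / Fintype.card F)
      = #E ^ 2 * (Fintype.card F : ℝ) ^ Fintype.card ι / Fintype.card F := by ring
  linarith [sum_card_filter_dotProduct_eq_dotProduct_le E]

theorem card_filter_dotProduct_eq_dotProduct_le (E : Finset (ι → F)) :
    (#{p ∈ (E ×ˢ E) ×ˢ (E ×ˢ E) | p.1.2 ⬝ᵥ p.1.1 = p.2.2 ⬝ᵥ p.2.1} : ℝ)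
      ≤ #E ^ 2 * (Fintype.card F : ℝ) ^ Fintype.card ι + #E ^ 4 / Fintype.card F := by
  have hrep : ∀ t, #{p ∈ E ×ˢ E | p.2 ⬝ᵥ p.1 = t} = ∑ z ∈ E, #{x ∈ E | z ⬝ᵥ x = t} := by
    intro t
    simp only [card_filter, sum_product_right]
  rw [card_filter_product_eq_sum_sq (E ×ˢ E) fun p => p.2 ⬝ᵥ p.1]
  simp_rw [hrep]
  push_cast
  calc ∑ t, (∑ z ∈ E, (#{x ∈ E | z ⬝ᵥ x = t} : ℝ)) ^ 2
      ≤ #E * ∑ z, ∑ t, ((#{x ∈ E | z ⬝ᵥ x = t} : ℝ) - #E / Fintype.card F) ^ 2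
        + (#E * #E) ^ 2 / Fintype.card F :=
        sum_sq_sum_le_card_mul_sum_sum_sub_sq_add E _ fun z => by
          exact_mod_cast sum_card_filter_eq_card E _
    _ ≤ #E * (#E * (Fintype.card F : ℝ) ^ Fintype.card ι) + (#E * #E) ^ 2 / Fintype.card F := by
        gcongr
        exact sum_sum_sub_sq_card_filter_dotProduct_le E
    _ = #E ^ 2 * (Fintype.card F : ℝ) ^ Fintype.card ι + #E ^ 4 / Fintype.card F := by ring

end

theorem stmt_13 :
    ∃ C C' : ℝ, 0 < C ∧ 0 < C' ∧
      ∀ (F : Type) [Field F] [Fintype F] [DecidableEq F]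
        (E : Finset (Fin 2 → F)),
        (E.card : ℝ) ≥ C * (Fintype.card F : ℝ) ^ ((3 : ℝ) / 2) →
        ((((E ×ˢ E) ×ˢ (E ×ˢ E)).filter
            (fun p => (∑ i, p.1.2 i * p.1.1 i) = ∑ i, p.2.2 i * p.2.1 i)).card : ℝ)
          ≤ C' * (E.card : ℝ) ^ 4 / Fintype.card F := by
  refine ⟨1, 2, one_pos, two_pos, fun F _ _ _ E hE => ?_⟩
  set q : ℝ := (Fintype.card F : ℝ)
  have hq : 0 < q := by positivity
  have hcube : q ^ 3 ≤ (#E : ℝ) ^ 2 := by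
    rw [one_mul] at hE
    calc q ^ 3 = (q ^ ((3 : ℝ) / 2)) ^ 2 := by
          rw [← Real.rpow_natCast (q ^ _) 2, ← Real.rpow_mul hq.le]; norm_num
      _ ≤ (#E : ℝ) ^ 2 := by gcongr
  have hsmall : (#E : ℝ) ^ 2 * q ^ 2 ≤ #E ^ 4 / q := by
    rw [le_div_iff₀ hq]
    nlinarith [sq_nonneg (#E : ℝ)]
  calc _ ≤ (#E : ℝ) ^ 2 * q ^ 2 + #E ^ 4 / q := by
        simpa using card_filter_dotProduct_eq_dotProduct_le E
    _ ≤ #E ^ 4 / q + #E ^ 4 / q := by gcongr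
    _ = 2 * #E ^ 4 / q := by ring
end

section
/- Let E ⊆ 𝔽_q³ with |E| ≥ q^(2+ε) for some ε > 0 and q sufficiently large. Then there do not exist subsets E₁, E₂, E₃ ⊆ E with |E_i| ≥ c|E| for each i (c > 0 an absolute constant) such that every triple (x, y, z) ∈ E₁ × E₂ × E₃ is linearly independent. -/
/-!
If every triple in `E₁ × E₂ × E₃` is linearly independent, no plane through the origin contains
points of all three sets, since three vectors of a plane are dependent. Hence, writing `Nᵢ` for the
set of normals of planes meeting `Eᵢ`, we get `|N₁| + |N₂| + |N₃| ≤ 2 (q³ - 1)`.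

On the other hand a set of more than `8 q²` nonzero points meets more than two thirds of all planes.
Let `n(a)` be the number of its points on the plane with normal `a`. Then `∑ n(a) = |E| (q² - 1)`,
and `∑ n(a)² ≤ |E| (|E| q + q³)`, because two independent points lie on a single plane (a line's
worth of normals) and a point has at most `q` dependent partners. Cauchy–Schwarz on the support of
`n` bounds `|Nᵢ|` from below; this second-moment count replaces Vinh's incidence bound. Finally
`c q^(2+ε) > 8 q²` once `q` is large.
-/

open Finset Matrix Module

theorem Finset.card_add_card_add_card_le_two_mul {α : Type*} [DecidableEq α]
    {s t u U : Finset α} (hs : s ⊆ U) (ht : t ⊆ U) (hu : u ⊆ U) (hstu : s ∩ t ∩ u = ∅) :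
    #s + #t + #u ≤ 2 * #U := by
  have hst := card_union_add_card_inter s t
  have hstu' := card_union_add_card_inter (s ∩ t) u
  have h₁ := card_le_card (union_subset hs ht)
  have h₂ := card_le_card (union_subset ((inter_subset_left (s₂ := t)).trans hs) hu)
  rw [hstu, card_empty] at hstu'
  omega

theorem Finset.sq_sum_le_card_filter_ne_zero_mul_sum_sq {ι : Type*} (s : Finset ι) (f : ι → ℕ) :
    (∑ i ∈ s, f i) ^ 2 ≤ #{i ∈ s | f i ≠ 0} * ∑ i ∈ s, f i ^ 2 := by
  calc (∑ i ∈ s, f i) ^ 2 = (∑ i ∈ s with f i ≠ 0, f i) ^ 2 := by rw [sum_filter_ne_zero]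
    _ ≤ #{i ∈ s | f i ≠ 0} * ∑ i ∈ s with f i ≠ 0, f i ^ 2 := sq_sum_le_card_mul_sum_sq
    _ ≤ #{i ∈ s | f i ≠ 0} * ∑ i ∈ s, f i ^ 2 :=
      Nat.mul_le_mul_left _ (sum_le_sum_of_subset (filter_subset _ s))

section PlanesThroughOrigin

variable {F : Type*} [Field F] {k n : ℕ}

theorem finrank_ker_mulVecLin_of_linearIndependent {M : Matrix (Fin k) (Fin n) F}
    (hM : LinearIndependent F M) : finrank F (LinearMap.ker M.mulVecLin) = n - k := by
  have hrank := LinearMap.finrank_range_add_finrank_ker M.mulVecLin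
  rw [← Matrix.rank, hM.rank_matrix, finrank_fin_fun, Fintype.card_fin] at hrank
  omega

theorem eq_zero_of_forall_dotProduct_eq_zero {v : Fin n → Fin n → F}
    (hv : LinearIndependent F v) {a : Fin n → F} (ha : ∀ i, v i ⬝ᵥ a = 0) : a = 0 := by
  have hker : LinearMap.ker (Matrix.mulVecLin v) = ⊥ := by
    rw [← Submodule.finrank_eq_zero, finrank_ker_mulVecLin_of_linearIndependent hv, Nat.sub_self]
  have : a ∈ LinearMap.ker (Matrix.mulVecLin v) := funext ha
  simpa [hker] using this

variable [Fintype F] [DecidableEq F]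

theorem card_filter_mulVec_eq_zero {M : Matrix (Fin k) (Fin n) F} (hM : LinearIndependent F M) :
    #{a | M *ᵥ a = 0} = Fintype.card F ^ (n - k) := by
  rw [← finrank_ker_mulVecLin_of_linearIndependent hM, ← Fintype.card_subtype,
    ← Nat.card_eq_fintype_card, ← Nat.card_eq_fintype_card, ← Module.natCard_eq_pow_finrank]
  rfl

theorem card_filter_dotProduct_eq_zero {p : Fin n → F} (hp : p ≠ 0) :
    #{a | p ⬝ᵥ a = 0} = Fintype.card F ^ (n - 1) := by
  rw [← card_filter_mulVec_eq_zero (M := ![p]) (linearIndependent_unique_iff.2 hp)]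
  simp [funext_iff, mulVec]

theorem card_filter_dotProduct_eq_zero_and {p r : Fin n → F} (h : LinearIndependent F ![p, r]) :
    #{a | p ⬝ᵥ a = 0 ∧ r ⬝ᵥ a = 0} = Fintype.card F ^ (n - 2) := by
  rw [← card_filter_mulVec_eq_zero h]
  simp [funext_iff, Fin.forall_fin_two, mulVec]

theorem card_filter_ne_zero_fun : #{a : Fin n → F | a ≠ 0} = Fintype.card F ^ n - 1 := by
  rw [filter_ne' univ 0, card_erase_of_mem (mem_univ _), card_univ, Fintype.card_fun,
    Fintype.card_fin]

theorem sum_card_filter_dotProduct_eq_zero_and_le {p : Fin n → F} (hp : p ≠ 0)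
    (E : Finset (Fin n → F)) :
    ∑ r ∈ E, #{a | p ⬝ᵥ a = 0 ∧ r ⬝ᵥ a = 0} ≤
      #E * Fintype.card F ^ (n - 2) + Fintype.card F * Fintype.card F ^ (n - 1) := by
  set line := univ.image fun t : F => t • p
  rw [← sum_filter_not_add_sum_filter E (· ∈ line)]
  gcongr
  · calc ∑ r ∈ E with r ∉ line, #{a | p ⬝ᵥ a = 0 ∧ r ⬝ᵥ a = 0}
        = ∑ r ∈ E with r ∉ line, Fintype.card F ^ (n - 2) := by
          refine sum_congr rfl fun r hr => card_filter_dotProduct_eq_zero_and ?_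
          rw [LinearIndependent.pair_iff' hp]
          rintro t rfl
          exact (mem_filter.1 hr).2 (mem_image_of_mem _ (mem_univ t))
      _ ≤ #E * Fintype.card F ^ (n - 2) := by
          rw [sum_const, smul_eq_mul]
          gcongr
          exact filter_subset _ _
  · calc ∑ r ∈ E with r ∈ line, #{a | p ⬝ᵥ a = 0 ∧ r ⬝ᵥ a = 0}
        ≤ ∑ r ∈ E with r ∈ line, Fintype.card F ^ (n - 1) := by
          refine sum_le_sum fun r _ => ?_
          rw [← card_filter_dotProduct_eq_zero hp]
          exact card_le_card (monotone_filter_right _ fun _ _ h => h.1)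
      _ ≤ Fintype.card F * Fintype.card F ^ (n - 1) := by
          rw [sum_const, smul_eq_mul]
          gcongr
          calc #{r ∈ E | r ∈ line} ≤ #line := card_le_card fun r hr => (mem_filter.1 hr).2
            _ ≤ Fintype.card F := card_image_le

theorem sum_card_filter_dotProduct_eq_zero {E : Finset (Fin n → F)} (h0 : 0 ∉ E) :
    ∑ a : Fin n → F with a ≠ 0, #{p ∈ E | p ⬝ᵥ a = 0} =
      #E * (Fintype.card F ^ (n - 1) - 1) := by
  calc ∑ a : Fin n → F with a ≠ 0, #{p ∈ E | p ⬝ᵥ a = 0}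
      = ∑ p ∈ E, #{a ∈ {a | a ≠ 0} | p ⬝ᵥ a = 0} := by
        simp only [card_filter]
        rw [sum_comm]
    _ = ∑ p ∈ E, (Fintype.card F ^ (n - 1) - 1) := by
        refine sum_congr rfl fun p hp => ?_
        have hErase : ({a ∈ {a | a ≠ 0} | p ⬝ᵥ a = 0} : Finset _) =
            ({a | p ⬝ᵥ a = 0} : Finset _).erase 0 := by
          ext; simp [and_comm]
        rw [hErase, card_erase_of_mem (by simp),
          card_filter_dotProduct_eq_zero (ne_of_mem_of_not_mem hp h0)]
    _ = #E * (Fintype.card F ^ (n - 1) - 1) := by rw [sum_const, smul_eq_mul]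

theorem sum_sq_card_filter_dotProduct_eq_zero_le {E : Finset (Fin n → F)} (h0 : 0 ∉ E) :
    ∑ a : Fin n → F with a ≠ 0, #{p ∈ E | p ⬝ᵥ a = 0} ^ 2 ≤
      #E * (#E * Fintype.card F ^ (n - 2) + Fintype.card F * Fintype.card F ^ (n - 1)) := by
  calc ∑ a : Fin n → F with a ≠ 0, #{p ∈ E | p ⬝ᵥ a = 0} ^ 2
      ≤ ∑ a, #{p ∈ E | p ⬝ᵥ a = 0} ^ 2 := sum_le_sum_of_subset (filter_subset _ _)
    _ = ∑ p ∈ E, ∑ r ∈ E, #{a | p ⬝ᵥ a = 0 ∧ r ⬝ᵥ a = 0} := by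
        simp only [sq, card_filter, sum_mul_sum, ite_zero_mul_ite_zero, mul_one, ite_and]
        rw [sum_comm]
        exact sum_congr rfl fun p _ => by rw [sum_comm]
    _ ≤ ∑ p ∈ E, (#E * Fintype.card F ^ (n - 2) + Fintype.card F * Fintype.card F ^ (n - 1)) :=
        sum_le_sum fun p hp =>
          sum_card_filter_dotProduct_eq_zero_and_le (ne_of_mem_of_not_mem hp h0) E
    _ = _ := by rw [sum_const, smul_eq_mul]

/-- A nonzero `a` stands for the plane `{x | x ⬝ᵥ a = 0}`; these are the normals of the planes
through the origin that contain a point of `E`. -/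
def incidentNormals (E : Finset (Fin n → F)) : Finset (Fin n → F) :=
  {a | a ≠ 0 ∧ ∃ p ∈ E, p ⬝ᵥ a = 0}

theorem sq_mul_le_card_incidentNormals_mul {E : Finset (Fin n → F)} (h0 : 0 ∉ E) :
    (#E * (Fintype.card F ^ (n - 1) - 1)) ^ 2 ≤ #(incidentNormals E) *
      (#E * (#E * Fintype.card F ^ (n - 2) + Fintype.card F * Fintype.card F ^ (n - 1))) := by
  have hSupp : incidentNormals E =
      ({a ∈ {a | a ≠ 0} | #{p ∈ E | p ⬝ᵥ a = 0} ≠ 0} : Finset _) := by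
    ext a
    simp [incidentNormals, filter_eq_empty_iff]
  rw [← sum_card_filter_dotProduct_eq_zero h0, hSupp]
  exact (sq_sum_le_card_filter_ne_zero_mul_sum_sq _ _).trans
    (Nat.mul_le_mul_left _ (sum_sq_card_filter_dotProduct_eq_zero_le h0))

theorem card_incidentNormals_add_add_le {E₁ E₂ E₃ : Finset (Fin 3 → F)}
    (hind : ∀ x ∈ E₁, ∀ y ∈ E₂, ∀ z ∈ E₃, LinearIndependent F ![x, y, z]) :
    #(incidentNormals E₁) + #(incidentNormals E₂) + #(incidentNormals E₃) ≤
      2 * (Fintype.card F ^ 3 - 1) := by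
  rw [← card_filter_ne_zero_fun]
  refine card_add_card_add_card_le_two_mul (monotone_filter_right _ fun _ _ h => h.1)
    (monotone_filter_right _ fun _ _ h => h.1) (monotone_filter_right _ fun _ _ h => h.1) ?_
  refine eq_empty_of_forall_notMem fun a ha => ?_
  simp only [incidentNormals, mem_inter, mem_filter, mem_univ, true_and] at ha
  obtain ⟨⟨⟨ha0, x, hx, hxa⟩, -, y, hy, hya⟩, -, z, hz, hza⟩ := ha
  exact ha0 (eq_zero_of_forall_dotProduct_eq_zero (hind x hx y hy z hz) (by
    intro i; fin_cases i <;> assumption))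

theorem two_mul_sub_one_lt_three_mul {q m s : ℝ} (hq : 3 ≤ q) (hm : 8 * q ^ 2 < m)
    (h : (m * (q ^ 2 - 1)) ^ 2 ≤ s * (m * (m * q + q ^ 3))) : 2 * (q ^ 3 - 1) < 3 * s := by
  have hm₀ : 0 < m := by nlinarith
  have h₁ : m * (q ^ 2 - 1) ^ 2 ≤ s * q * (m + q ^ 2) :=
    le_of_mul_le_mul_left (by linarith) hm₀
  have h₂ : 8 * (q ^ 2 - 1) ^ 2 < 9 * s * q := by
    have : 8 * (m + q ^ 2) * (q ^ 2 - 1) ^ 2 < 9 * s * q * (m + q ^ 2) := by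
      nlinarith [mul_pos (pow_pos (by nlinarith : (0 : ℝ) < q ^ 2 - 1) 2)
        (by linarith : 0 < m - 8 * q ^ 2)]
    nlinarith
  have h₃ : 6 * q * (q ^ 3 - 1) ≤ 8 * (q ^ 2 - 1) ^ 2 := by
    nlinarith [mul_nonneg (sq_nonneg q) (by nlinarith : (0 : ℝ) ≤ q ^ 2 - 8)]
  nlinarith

theorem two_mul_lt_three_mul_card_incidentNormals {E : Finset (Fin 3 → F)} (h0 : 0 ∉ E)
    (hq : 3 ≤ Fintype.card F) (hE : 8 * Fintype.card F ^ 2 < #E) :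
    2 * (Fintype.card F ^ 3 - 1) < 3 * #(incidentNormals E) := by
  have h := sq_mul_le_card_incidentNormals_mul h0
  simp only [Nat.reduceSub, pow_one, ← pow_succ', Nat.reduceAdd] at h
  have hq₂ : 1 ≤ Fintype.card F ^ 2 := Nat.one_le_pow _ _ (by omega)
  have hq₃ : 1 ≤ Fintype.card F ^ 3 := Nat.one_le_pow _ _ (by omega)
  exact_mod_cast two_mul_sub_one_lt_three_mul (q := Fintype.card F) (m := #E)
    (s := #(incidentNormals E)) (by exact_mod_cast hq) (by exact_mod_cast hE) (by exact_mod_cast h)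

theorem not_forall_linearIndependent_of_card_gt {E₁ E₂ E₃ : Finset (Fin 3 → F)}
    (hq : 3 ≤ Fintype.card F) (h₁ : 8 * Fintype.card F ^ 2 < #E₁)
    (h₂ : 8 * Fintype.card F ^ 2 < #E₂) (h₃ : 8 * Fintype.card F ^ 2 < #E₃) :
    ¬ ∀ x ∈ E₁, ∀ y ∈ E₂, ∀ z ∈ E₃, LinearIndependent F ![x, y, z] := by
  intro hind
  obtain ⟨x, hx⟩ := card_pos.1 (by omega : 0 < #E₁)
  obtain ⟨y, hy⟩ := card_pos.1 (by omega : 0 < #E₂)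
  obtain ⟨z, hz⟩ := card_pos.1 (by omega : 0 < #E₃)
  have b₁ := two_mul_lt_three_mul_card_incidentNormals
    (fun h => (hind 0 h y hy z hz).ne_zero 0 rfl) hq h₁
  have b₂ := two_mul_lt_three_mul_card_incidentNormals
    (fun h => (hind x hx 0 h z hz).ne_zero 1 rfl) hq h₂
  have b₃ := two_mul_lt_three_mul_card_incidentNormals
    (fun h => (hind x hx y hy 0 h).ne_zero 2 rfl) hq h₃
  have := card_incidentNormals_add_add_le hind
  omega

end PlanesThroughOrigin

theorem eventually_mul_sq_lt_mul_rpow {c ε : ℝ} (hc : 0 < c) (hε : 0 < ε) :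
    ∀ᶠ q : ℕ in Filter.atTop, 8 * (q : ℝ) ^ 2 < c * (q : ℝ) ^ ((2 : ℝ) + ε) := by
  have hlarge :=
    ((tendsto_rpow_atTop hε).comp tendsto_natCast_atTop_atTop).eventually_gt_atTop (8 / c)
  filter_upwards [hlarge, Filter.eventually_gt_atTop 0] with q hq hq₀
  have hq₀' : (0 : ℝ) < q := by exact_mod_cast hq₀
  rw [Real.rpow_add hq₀', Real.rpow_two]
  rw [Function.comp_apply, div_lt_iff₀ hc] at hq
  nlinarith [pow_pos hq₀' 2]

theorem stmt_16 (c : ℝ) (hc : 0 < c) (ε : ℝ) (hε : 0 < ε) :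
    ∃ q₀ : ℕ, ∀ (F : Type) [Field F] [Fintype F] [DecidableEq F],
      q₀ ≤ Fintype.card F →
      ∀ (E : Finset (Fin 3 → F)),
        (E.card : ℝ) ≥ (Fintype.card F : ℝ) ^ ((2 : ℝ) + ε) →
        ¬ ∃ E₁ E₂ E₃ : Finset (Fin 3 → F),
            E₁ ⊆ E ∧ E₂ ⊆ E ∧ E₃ ⊆ E ∧
            (E₁.card : ℝ) ≥ c * E.card ∧ (E₂.card : ℝ) ≥ c * E.card ∧
            (E₃.card : ℝ) ≥ c * E.card ∧
            ∀ x ∈ E₁, ∀ y ∈ E₂, ∀ z ∈ E₃, LinearIndependent F ![x, y, z] := by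
  obtain ⟨q₀, hq₀⟩ := Filter.eventually_atTop.1
    ((eventually_mul_sq_lt_mul_rpow hc hε).and (Filter.eventually_ge_atTop 3))
  refine ⟨q₀, ?_⟩
  rintro F _ _ _ hq E hE ⟨E₁, E₂, E₃, -, -, -, h₁, h₂, h₃, hind⟩
  obtain ⟨hlarge, hq₃⟩ := hq₀ _ hq
  have hbig (E' : Finset (Fin 3 → F)) (hE' : (E'.card : ℝ) ≥ c * E.card) :
      8 * Fintype.card F ^ 2 < #E' := by
    exact_mod_cast hlarge.trans_le ((mul_le_mul_of_nonneg_left hE hc.le).trans hE')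
  exact not_forall_linearIndependent_of_card_gt hq₃ (hbig E₁ h₁) (hbig E₂ h₂) (hbig E₃ h₃) hind
end
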